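/- arXiv:1504.03263 — 4 statements merged into one kernel-verified Lean document; each statement's English description precedes it below -/
import Mathlib

section
/- Let (f_{ij})_{1≤i,j≤n} be arithmetic functions and a_i, b_i (1 ≤ i ≤ n) positive real numbers such that a_i·b_j ≤ v(f_{ij}) for all i,j. Then the determinant of the matrix (f_{ij}) computed in the Dirichlet convolution ring, evaluated at the product ∏_k a_k b_k, equals the complex determinant det(f_{ij}(a_i b_j)). -/
open ArithmeticFunction
open scoped Classical

/-- The embedding of `ℂ` into the Dirichlet ring of arithmetic functions,
sending `c` to the function with value `c` at `1` and `0` elsewhere. -/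
noncomputable def CC : ℂ →+* ArithmeticFunction ℂ where
  toFun c := ⟨fun n => if n = 1 then c else 0, by simp⟩
  map_zero' := by ext n; simp
  map_one' := by ext n; simp [ArithmeticFunction.one_apply]
  map_add' a b := by ext n; erw [ArithmeticFunction.add_apply]; by_cases h : n = 1 <;> simp [h]
  map_mul' a b := by
    ext n
    erw [ArithmeticFunction.mul_apply]
    by_cases h : n = 1
    · subst h
      rw [show Nat.divisorsAntidiagonal 1 = {(1,1)} from rfl]
      simp
    · rw [Finset.sum_eq_zero]
      · simp [h]
      · rintro ⟨d, e⟩ hde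
        rw [Nat.mem_divisorsAntidiagonal] at hde
        rcases Decidable.eq_or_ne d 1 with hd | hd
        · have : e ≠ 1 := by rintro rfl; exact h (by simp [← hde.1, hd])
          simp [this]
        · simp [hd]

/-- The order `v f` of an arithmetic function: the least element of the support
(`sInf` of the empty set is `0` for `f = 0`; that case is always excluded by hypotheses). -/
noncomputable def ordN (f : ArithmeticFunction ℂ) : ℕ := sInf {n : ℕ | f n ≠ 0}

/-- The order as an extended natural number, `⊤` for `f = 0`. -/
noncomputable def ordE (f : ArithmeticFunction ℂ) : ℕ∞ :=
  sInf ((fun n : ℕ => (n : ℕ∞)) '' {n : ℕ | f n ≠ 0})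

/-- The norm `‖f‖ = 1/v(f)`, with `1/∞ = 0`. -/
noncomputable def nrm (f : ArithmeticFunction ℂ) : ℝ :=
  if f = 0 then 0 else 1 / (ordN f : ℝ)

/-- Extension of an arithmetic function to `ℝ`, vanishing off `ℕ`. -/
noncomputable def extR (f : ArithmeticFunction ℂ) (x : ℝ) : ℂ :=
  if h : ∃ n : ℕ, (n : ℝ) = x then f h.choose else 0

/-- The exponential map `Exp f = exp(f 1) * ∑ (f - f 1)^k / k!` of the Dirichlet ring.
Since `(f - f 1)^k` has order `≥ 2^k`, the value of the infinite series at `n` equals the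
value of the partial sum up to `k = n`. -/
noncomputable def ExpA (f : ArithmeticFunction ℂ) : ArithmeticFunction ℂ :=
  ⟨fun n => Complex.exp (f 1) *
      ((∑ k ∈ Finset.range (n + 1),
        CC ((Nat.factorial k : ℂ)⁻¹) * (f - CC (f 1)) ^ k) n), by simp⟩

/-- The `p`-basic derivation `(∂_p f) n = v_p (n p) • f (n p)`. -/
noncomputable def DP (p : ℕ) (f : ArithmeticFunction ℂ) : ArithmeticFunction ℂ :=
  ⟨fun n => (padicValNat p (n * p) : ℂ) * f (n * p), by simp⟩

/-- The log-derivation `(∂_L f) n = log n * f n`. -/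
noncomputable def DL (f : ArithmeticFunction ℂ) : ArithmeticFunction ℂ :=
  ⟨fun n => (Real.log n : ℂ) * f n, by simp⟩

/-- The pointwise multiplication operator `𝔪_g`. -/
noncomputable def MG (g f : ArithmeticFunction ℂ) : ArithmeticFunction ℂ :=
  ⟨fun n => g n * f n, by simp⟩

/-- Integer powers `𝔪_g^i` of the pointwise multiplication operator:
`(𝔪_g^i f) n = (g n)^i * f n`. -/
noncomputable def MGi (g : ArithmeticFunction ℂ) (i : ℤ) (f : ArithmeticFunction ℂ) :
    ArithmeticFunction ℂ := ⟨fun n => g n ^ i * f n, by simp⟩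

/-- `D` is a (ℂ-linear) derivation of the ring of arithmetic functions
under Dirichlet convolution. -/
def IsDerivationA (D : ArithmeticFunction ℂ → ArithmeticFunction ℂ) : Prop :=
  (∀ f g, D (f + g) = D f + D g) ∧
  (∀ (c : ℂ) (f), D (CC c * f) = CC c * D f) ∧
  (∀ f g, D (f * g) = D f * g + f * D g)

/-- Convergence of a sequence of arithmetic functions in the norm topology. -/
def TendstoA (s : ℕ → ArithmeticFunction ℂ) (l : ArithmeticFunction ℂ) : Prop :=
  Filter.Tendsto (fun m => nrm (s m - l)) Filter.atTop (nhds 0)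

/-- (Sequential) continuity of a map in the norm topology, which for this
ultrametric is equivalent to continuity. -/
def ContinuousA (D : ArithmeticFunction ℂ → ArithmeticFunction ℂ) : Prop :=
  ∀ (s : ℕ → ArithmeticFunction ℂ) (l), TendstoA s l → TendstoA (fun m => D (s m)) (D l)

/-- The indicator function `e_m` of the singleton `{m}`. -/
noncomputable def En (m : ℕ) : ArithmeticFunction ℂ :=
  ⟨fun n => if 0 < n ∧ n = m then 1 else 0, by simp⟩

/-- The constant one arithmetic function `𝟙`. -/
noncomputable def OneA : ArithmeticFunction ℂ := ⟨fun n => if n = 0 then 0 else 1, by simp⟩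

/-- The ℂ-algebra structure of the ring of arithmetic functions, via `CC`. -/
noncomputable instance : Algebra ℂ (ArithmeticFunction ℂ) := CC.toAlgebra

/-! Expanding both determinants by Leibniz' formula, and using that evaluation at a fixed point
is additive, it suffices to evaluate each product `∏ i, f (σ i) i` at
`∏ i, a (σ i) * b i = ∏ k, a k * b k`. Since each factor has order at least its own evaluation
point, evaluating the convolution there is multiplicative. -/

/-- `c ≤ v(f)`, stated on the support so that it holds for `f = 0` as well. -/
def OrderGE {R : Type*} [Zero R] (f : ArithmeticFunction R) (c : ℝ) : Prop :=
  ∀ m : ℕ, f m ≠ 0 → c ≤ m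

lemma OrderGE.one {R : Type*} [Semiring R] : OrderGE (1 : ArithmeticFunction R) 1 := by
  intro m hm
  obtain rfl : m = 1 := by_contra fun h => hm (ArithmeticFunction.one_apply_ne h)
  simp

lemma OrderGE.mul {R : Type*} [Semiring R] {f g : ArithmeticFunction R} {c d : ℝ}
    (hc : 0 ≤ c) (hd : 0 ≤ d) (hf : OrderGE f c) (hg : OrderGE g d) :
    OrderGE (f * g) (c * d) := by
  intro m hm
  rw [ArithmeticFunction.mul_apply] at hm
  obtain ⟨⟨x, y⟩, hxy, hne⟩ := Finset.exists_ne_zero_of_sum_ne_zero hm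
  have hx : c ≤ x := hf x (left_ne_zero_of_mul hne)
  have hy : d ≤ y := hg y (right_ne_zero_of_mul hne)
  calc c * d ≤ x * y := mul_le_mul hx hy hd (hc.trans hx)
    _ = m := by rw [← Nat.cast_mul, (Nat.mem_divisorsAntidiagonal.mp hxy).1]

lemma OrderGE.prod {R ι : Type*} [CommSemiring R] {s : Finset ι} {g : ι → ArithmeticFunction R}
    {c : ι → ℝ} (hc : ∀ i ∈ s, 0 ≤ c i) (hg : ∀ i ∈ s, OrderGE (g i) (c i)) :
    OrderGE (∏ i ∈ s, g i) (∏ i ∈ s, c i) := by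
  induction s using Finset.induction with
  | empty => simpa using OrderGE.one
  | insert x s hx ih =>
    rw [Finset.prod_insert hx, Finset.prod_insert hx]
    simp only [Finset.mem_insert, forall_eq_or_imp] at hc hg
    exact hg.1.mul hc.1 (Finset.prod_nonneg hc.2) (ih hc.2 hg.2)

lemma extR_natCast (f : ArithmeticFunction ℂ) (n : ℕ) : extR f n = f n := by
  have h : ∃ m : ℕ, (m : ℝ) = n := ⟨n, rfl⟩
  rw [extR, dif_pos h, Nat.cast_injective h.choose_spec]

lemma extR_eq_zero {f : ArithmeticFunction ℂ} {x : ℝ}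
    (h : ∀ n : ℕ, (n : ℝ) = x → f n = 0) : extR f x = 0 := by
  unfold extR
  split_ifs with hx
  exacts [h _ hx.choose_spec, rfl]

noncomputable def extRAddHom (x : ℝ) : ArithmeticFunction ℂ →+ ℂ where
  toFun f := extR f x
  map_zero' := extR_eq_zero fun _ _ => rfl
  map_add' f g := by unfold extR; split_ifs <;> simp

lemma eq_and_eq_of_mul_eq_mul_of_le {c d x y : ℝ} (hc : 0 < c) (hd : 0 < d) (hx : c ≤ x)
    (hy : d ≤ y) (h : x * y = c * d) : x = c ∧ y = d := by
  constructor <;> nlinarith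

/-- Only the term `f c * g d` of the convolution sum at `c * d` can survive, since every other
divisor pair `(x, y)` has `x > c` or `y > d`. -/
lemma extR_mul {f g : ArithmeticFunction ℂ} {c d : ℝ} (hc : 0 < c) (hd : 0 < d)
    (hf : OrderGE f c) (hg : OrderGE g d) :
    extR (f * g) (c * d) = extR f c * extR g d := by
  have only_term : ∀ n : ℕ, (n : ℝ) = c * d → ∀ p ∈ n.divisorsAntidiagonal,
      f p.1 * g p.2 ≠ 0 → (p.1 : ℝ) = c ∧ (p.2 : ℝ) = d := by
    rintro n hn ⟨x, y⟩ hxy hne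
    refine eq_and_eq_of_mul_eq_mul_of_le hc hd (hf x (left_ne_zero_of_mul hne))
      (hg y (right_ne_zero_of_mul hne)) ?_
    rw [← Nat.cast_mul, (Nat.mem_divisorsAntidiagonal.mp hxy).1, hn]
  by_cases hcd : ∃ p q : ℕ, (p : ℝ) = c ∧ (q : ℝ) = d
  · obtain ⟨p, q, rfl, rfl⟩ := hcd
    have hp : 0 < p := by exact_mod_cast hc
    have hq : 0 < q := by exact_mod_cast hd
    rw [← Nat.cast_mul, extR_natCast, extR_natCast, extR_natCast, ArithmeticFunction.mul_apply,
      Finset.sum_eq_single (p, q)]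
    · rintro ⟨x, y⟩ hxy hne
      by_contra h0
      obtain ⟨hx, hy⟩ := only_term _ (Nat.cast_mul p q) _ hxy h0
      exact hne (Prod.ext (Nat.cast_injective hx) (Nat.cast_injective hy))
    · intro h
      exact absurd (Nat.mem_divisorsAntidiagonal.mpr ⟨rfl, by positivity⟩) h
  · push Not at hcd
    have lhs : extR (f * g) (c * d) = 0 := extR_eq_zero fun n hn => by
      rw [ArithmeticFunction.mul_apply]
      refine Finset.sum_eq_zero fun p hp => ?_
      by_contra h0
      obtain ⟨hx, hy⟩ := only_term n hn p hp h0
      exact hcd _ _ hx hy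
    rw [lhs, eq_comm]
    by_cases hc' : ∃ p : ℕ, (p : ℝ) = c
    · obtain ⟨p, hp⟩ := hc'
      rw [extR_eq_zero (fun q hq => absurd hq (hcd p q hp)), mul_zero]
    · push Not at hc'
      rw [extR_eq_zero (fun p hp => absurd hp (hc' p)), zero_mul]

lemma extR_prod {ι : Type*} {s : Finset ι} {g : ι → ArithmeticFunction ℂ} {c : ι → ℝ}
    (hc : ∀ i ∈ s, 0 < c i) (hg : ∀ i ∈ s, OrderGE (g i) (c i)) :
    extR (∏ i ∈ s, g i) (∏ i ∈ s, c i) = ∏ i ∈ s, extR (g i) (c i) := by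
  induction s using Finset.induction with
  | empty => simpa using extR_natCast 1 1
  | insert x s hx ih =>
    simp only [Finset.mem_insert, forall_eq_or_imp] at hc hg
    rw [Finset.prod_insert hx, Finset.prod_insert hx, Finset.prod_insert hx,
      extR_mul hc.1 (Finset.prod_pos hc.2) hg.1
        (OrderGE.prod (fun i hi => (hc.2 i hi).le) hg.2),
      ih hc.2 hg.2]

/-- If `a i * b j ≤ v (f i j)` for all `i, j`, then the determinant of `(f i j)` in the
Dirichlet convolution ring, evaluated at `∏ a k * b k`, equals `det (f i j (a i * b j))`. -/
theorem stmt1 (n : ℕ) (f : Fin n → Fin n → ArithmeticFunction ℂ) (a b : Fin n → ℝ)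
    (ha : ∀ i, 0 < a i) (hb : ∀ i, 0 < b i)
    (hord : ∀ i j, ∀ m : ℕ, (f i j) m ≠ 0 → a i * b j ≤ m) :
    extR (Matrix.det (Matrix.of fun i j => f i j)) (∏ k, a k * b k)
      = Matrix.det (Matrix.of fun i j => extR (f i j) (a i * b j)) := by
  rw [Matrix.det_apply, Matrix.det_apply]
  change extRAddHom _ _ = _
  rw [map_sum]
  refine Finset.sum_congr rfl fun σ _ => ?_
  rw [Units.smul_def, Units.smul_def, map_zsmul]
  congr 1
  have hprod : ∏ k, a k * b k = ∏ i, a (σ i) * b i := by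
    rw [Finset.prod_mul_distrib, Finset.prod_mul_distrib, Equiv.prod_comp σ a]
  rw [hprod]
  exact extR_prod (fun i _ => mul_pos (ha _) (hb _)) (fun i _ => hord (σ i) i)
end

section
/- The Rearick logarithm κ = Log(𝟙) of the constant-one arithmetic function satisfies: κ(n) = 1/j if n = p^j for some prime p and j ≥ 1, and κ(n) = 0 otherwise (in particular κ(1) = 0). Equivalently, ∂_L κ = Λ, the von Mangoldt function, where ∂_L is the log-derivation. -/
open ArithmeticFunction
open scoped Classical

/-! The log-derivation `∂_L` is a derivation of the Dirichlet ring, so it differentiates the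
exponential series term by term: `∂_L (Exp f) = Exp f * ∂_L f` when `f 1 = 0` (at each `n` the
series is a finite sum, since `f ^ k` vanishes below `2 ^ k`). For `κ = Log 𝟙` this reads
`𝟙 * ∂_L κ = ∂_L 𝟙 = log`, the divisor-sum identity that also characterizes `Λ`; Möbius inversion
gives `∂_L κ = Λ`, and dividing by `log n` yields the values of `κ`. -/

open Finset
open scoped ArithmeticFunction.zeta ArithmeticFunction.Moebius

namespace ArithmeticFunction

theorem sum_apply {R ι : Type*} [AddCommMonoid R] (s : Finset ι) (f : ι → ArithmeticFunction R)
    (n : ℕ) : (∑ i ∈ s, f i) n = ∑ i ∈ s, f i n := by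
  classical
  induction s using Finset.induction_on with
  | empty => simp
  | insert i s hi ih => rw [sum_insert hi, sum_insert hi, add_apply, ih]

theorem mul_apply_congr_left {R : Type*} [Semiring R] {f g : ArithmeticFunction R}
    (h : ArithmeticFunction R) {n : ℕ} (hfg : ∀ m ≤ n, f m = g m) :
    (f * h) n = (g * h) n := by
  rcases n.eq_zero_or_pos with rfl | hn
  · simp
  simp only [mul_apply]
  refine sum_congr rfl fun x hx => ?_
  rw [hfg x.1 (Nat.divisor_le (Nat.fst_mem_divisors_of_mem_antidiagonal hx))]

theorem pow_apply_eq_zero_of_lt_two_pow {R : Type*} [Semiring R] {f : ArithmeticFunction R}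
    (hf : f 1 = 0) {k m : ℕ} (hm : m < 2 ^ k) : (f ^ k) m = 0 := by
  induction k generalizing m with
  | zero => interval_cases m; simp
  | succ k ih =>
    rw [pow_succ, mul_apply]
    refine sum_eq_zero fun x hx => ?_
    obtain ⟨hx, hm0⟩ := Nat.mem_divisorsAntidiagonal.mp hx
    rcases lt_trichotomy x.2 1 with h0 | h1 | h2
    · simp_all
    · rw [h1, hf, mul_zero]
    · have : x.1 * 2 ≤ m := hx ▸ Nat.mul_le_mul_left _ h2
      rw [ih (by rw [pow_succ] at hm; omega), zero_mul]

theorem eq_of_sum_divisors_eq {R : Type*} [AddCommGroup R] {f g : ℕ → R}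
    (h : ∀ n > 0, ∑ d ∈ n.divisors, f d = ∑ d ∈ n.divisors, g d) {n : ℕ} (hn : 0 < n) :
    f n = g n := by
  have hf := (sum_eq_iff_sum_smul_moebius_eq (f := f)).mp (fun _ _ => rfl) n hn
  have hg := sum_eq_iff_sum_smul_moebius_eq.mp (fun n hn => (h n hn).symm) n hn
  rw [← hf, ← hg]

end ArithmeticFunction

open ArithmeticFunction

theorem OneA_eq_zeta : OneA = (ζ : ArithmeticFunction ℂ) := by
  ext n
  simp [OneA, zeta_apply]

theorem CC_apply (c : ℂ) (n : ℕ) : CC c n = if n = 1 then c else 0 := rfl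

theorem CC_mul_apply (c : ℂ) (f : ArithmeticFunction ℂ) (n : ℕ) :
    (CC c * f) n = c * f n := by
  rcases n.eq_zero_or_pos with rfl | hn
  · simp
  rw [mul_apply, sum_eq_single (1, n)]
  · simp [CC_apply]
  · rintro ⟨d, e⟩ hde hne
    have hd : d ≠ 1 := by
      rintro rfl
      exact hne (by simp_all)
    simp [CC_apply, hd]
  · simp [hn.ne']

theorem DL_apply (f : ArithmeticFunction ℂ) (n : ℕ) : DL f n = (Real.log n : ℂ) * f n := rfl

theorem DL_mul (f g : ArithmeticFunction ℂ) : DL (f * g) = DL f * g + f * DL g := by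
  ext n
  simp only [DL_apply, ArithmeticFunction.add_apply, mul_apply, ← sum_add_distrib, Finset.mul_sum]
  refine sum_congr rfl fun x hx => ?_
  obtain ⟨rfl, hn⟩ := Nat.mem_divisorsAntidiagonal.mp hx
  have h1 : (x.1 : ℝ) ≠ 0 := by exact_mod_cast left_ne_zero_of_mul hn
  have h2 : (x.2 : ℝ) ≠ 0 := by exact_mod_cast right_ne_zero_of_mul hn
  push_cast
  rw [Real.log_mul h1 h2]
  push_cast
  ring

theorem DL_sum {ι : Type*} (s : Finset ι) (f : ι → ArithmeticFunction ℂ) :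
    DL (∑ i ∈ s, f i) = ∑ i ∈ s, DL (f i) := by
  ext n
  simp only [DL_apply, ArithmeticFunction.sum_apply, Finset.mul_sum]

theorem DL_CC (c : ℂ) : DL (CC c) = 0 := by
  ext n
  by_cases hn : n = 1 <;> simp [DL_apply, CC_apply, hn]

theorem DL_CC_mul (c : ℂ) (f : ArithmeticFunction ℂ) : DL (CC c * f) = CC c * DL f := by
  ext n
  simp only [DL_apply, CC_mul_apply]
  ring

theorem DL_pow_succ (f : ArithmeticFunction ℂ) (k : ℕ) :
    DL (f ^ (k + 1)) = ((k + 1 : ℕ) : ArithmeticFunction ℂ) * f ^ k * DL f := by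
  induction k with
  | zero => simp
  | succ k ih =>
    rw [pow_succ, DL_mul, ih]
    push_cast
    ring

noncomputable def expTrunc (f : ArithmeticFunction ℂ) (N : ℕ) : ArithmeticFunction ℂ :=
  ∑ k ∈ range (N + 1), CC (k.factorial : ℂ)⁻¹ * f ^ k

theorem expTrunc_apply (f : ArithmeticFunction ℂ) (N n : ℕ) :
    expTrunc f N n = ∑ k ∈ range (N + 1), (k.factorial : ℂ)⁻¹ * (f ^ k) n := by
  simp only [expTrunc, ArithmeticFunction.sum_apply, CC_mul_apply]

theorem ExpA_apply_eq_expTrunc {f : ArithmeticFunction ℂ} (hf : f 1 = 0) {n N : ℕ}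
    (hN : n ≤ N) : ExpA f n = expTrunc f N n := by
  have hExp : ExpA f n = expTrunc f n n := by
    simp [ExpA, expTrunc, hf]
  rw [hExp, expTrunc_apply, expTrunc_apply]
  refine sum_subset (range_subset_range.mpr (by omega)) fun k _ hk => ?_
  rw [pow_apply_eq_zero_of_lt_two_pow hf, mul_zero]
  exact n.lt_two_pow_self.trans_le (Nat.pow_le_pow_right two_pos (by simp at hk; omega))

theorem DL_expTrunc_succ (f : ArithmeticFunction ℂ) (N : ℕ) :
    DL (expTrunc f (N + 1)) = expTrunc f N * DL f := by
  have hterm : ∀ k : ℕ, CC ((k + 1).factorial : ℂ)⁻¹ * DL (f ^ (k + 1)) =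
      CC (k.factorial : ℂ)⁻¹ * f ^ k * DL f := fun k => by
    have hcoeff : ((k + 1).factorial : ℂ)⁻¹ * (k + 1 : ℕ) = (k.factorial : ℂ)⁻¹ := by
      rw [Nat.factorial_succ, Nat.cast_mul, mul_inv, mul_comm, ← mul_assoc,
        mul_inv_cancel₀ (Nat.cast_ne_zero.mpr k.succ_ne_zero), one_mul]
    rw [DL_pow_succ, ← map_natCast CC, ← mul_assoc, ← mul_assoc, ← map_mul, hcoeff]
  rw [expTrunc, DL_sum, sum_range_succ', pow_zero, mul_one, DL_CC, add_zero, expTrunc, sum_mul]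
  exact sum_congr rfl fun k _ => by rw [DL_CC_mul, hterm]

theorem DL_ExpA {f : ArithmeticFunction ℂ} (hf : f 1 = 0) : DL (ExpA f) = ExpA f * DL f := by
  ext n
  calc DL (ExpA f) n = DL (expTrunc f (n + 1)) n := by
        rw [DL_apply, DL_apply, ExpA_apply_eq_expTrunc hf n.le_succ]
    _ = (expTrunc f n * DL f) n := by rw [DL_expTrunc_succ]
    _ = (ExpA f * DL f) n :=
        mul_apply_congr_left _ fun m hm => (ExpA_apply_eq_expTrunc hf hm).symm

theorem sum_divisors_log_mul_eq_log {κ : ArithmeticFunction ℂ} (hκ1 : κ 1 = 0)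
    (hκ : ExpA κ = OneA) {n : ℕ} (hn : 0 < n) :
    ∑ d ∈ n.divisors, (Real.log d : ℂ) * κ d = Real.log n := by
  have h := congrArg (· n) (DL_ExpA hκ1)
  simp only [hκ, OneA_eq_zeta, coe_zeta_mul_apply, DL_apply, natCoe_apply, zeta_apply,
    hn.ne', if_false, Nat.cast_one, mul_one] at h
  exact h.symm

theorem apply_prime_pow_of_log_mul_eq_vonMangoldt {g : ℕ → ℂ}
    (hg : ∀ n : ℕ, (Real.log n : ℂ) * g n = (Λ n : ℂ)) {p j : ℕ} (hp : p.Prime) (hj : j ≠ 0) :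
    g (p ^ j) = 1 / j := by
  have h := hg (p ^ j)
  rw [vonMangoldt_apply_pow hj, vonMangoldt_apply_prime hp, Nat.cast_pow, Real.log_pow] at h
  have hlog : (Real.log p : ℂ) ≠ 0 :=
    Complex.ofReal_ne_zero.mpr (Real.log_pos (by exact_mod_cast hp.one_lt)).ne'
  have hj' : (j : ℂ) ≠ 0 := Nat.cast_ne_zero.mpr hj
  rw [Complex.ofReal_mul, Complex.ofReal_natCast] at h
  field_simp
  exact mul_left_cancel₀ hlog (by linear_combination h)

theorem apply_eq_zero_of_log_mul_eq_vonMangoldt {g : ℕ → ℂ}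
    (hg : ∀ n : ℕ, (Real.log n : ℂ) * g n = (Λ n : ℂ)) {n : ℕ} (hn : 1 < n)
    (hpp : ¬IsPrimePow n) : g n = 0 := by
  have h := hg n
  rw [vonMangoldt_eq_zero_iff.mpr hpp, Complex.ofReal_zero] at h
  have hlog : (Real.log n : ℂ) ≠ 0 :=
    Complex.ofReal_ne_zero.mpr (Real.log_pos (by exact_mod_cast hn)).ne'
  exact (mul_eq_zero.mp h).resolve_left hlog

/-- The Rearick logarithm `κ = Log 𝟙` (characterized by `κ 1 = 0` and `Exp κ = 𝟙`)
satisfies `κ (p^j) = 1/j` for primes `p` and `j ≥ 1`, and `κ n = 0` otherwise;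
equivalently `∂_L κ = Λ`, the von Mangoldt function. -/
theorem stmt7 (κ : ArithmeticFunction ℂ) (hκ1 : κ 1 = 0) (hκ : ExpA κ = OneA) :
    (∀ p j : ℕ, p.Prime → 1 ≤ j → κ (p ^ j) = 1 / (j : ℂ)) ∧
    (∀ n : ℕ, (¬ ∃ p j : ℕ, p.Prime ∧ 1 ≤ j ∧ n = p ^ j) → κ n = 0) ∧
    (∀ n : ℕ, (Real.log n : ℂ) * κ n = ((ArithmeticFunction.vonMangoldt n : ℝ) : ℂ)) := by
  have hDL : ∀ n : ℕ, (Real.log n : ℂ) * κ n = (Λ n : ℂ) := by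
    intro n
    rcases n.eq_zero_or_pos with rfl | hn
    · simp
    refine eq_of_sum_divisors_eq (f := fun d => (Real.log d : ℂ) * κ d) (g := fun d => (Λ d : ℂ))
      (fun m hm => ?_) hn
    rw [sum_divisors_log_mul_eq_log hκ1 hκ hm, ← Complex.ofReal_sum, vonMangoldt_sum]
  refine ⟨fun p j hp hj => apply_prime_pow_of_log_mul_eq_vonMangoldt hDL hp (by omega),
    fun n hn => ?_, hDL⟩
  rcases lt_trichotomy n 1 with h0 | rfl | h1
  · simp [Nat.lt_one_iff.mp h0]
  · exact hκ1
  · refine apply_eq_zero_of_log_mul_eq_vonMangoldt hDL h1 fun hpp => hn ?_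
    obtain ⟨p, j, hp, hj, rfl⟩ := (isPrimePow_nat_iff n).mp hpp
    exact ⟨p, j, hp, hj, rfl⟩
end

section
/- If f₁,...,f_n are nonzero arithmetic functions and p₁,...,p_n are distinct primes such that the Jacobian det(∂_{p_j} f_i) (a determinant in the Dirichlet convolution ring) is the zero function, then the integer matrix (v_{p_j}(v(f_i)))_{i,j} has zero determinant, where v(f_i) is the order of f_i. -/
open ArithmeticFunction
open scoped Classical

/-!
Write `mᵢ = v(fᵢ)`. Since `∂_p f` is supported on the `d` with `m ≤ d p`, the convolution
`∏ᵢ ∂_{pᵢ} f_{τ i}` vanishes below `∏ᵢ ⌈m_{τ i} / pᵢ⌉`. Hence at `N = ∏ mᵢ / ∏ pᵢ` it takes the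
value `∏ᵢ v_{pᵢ}(m_{τ i}) f_{τ i}(m_{τ i})`: if every `pᵢ ∣ m_{τ i}`, `N` is exactly that bound and
only the leading coefficients contribute, and otherwise `N` lies below the bound while some
`v_{pᵢ}(m_{τ i})` is `0`. Summing over `τ`, the Jacobian evaluated at `N` is
`det (v_{pⱼ}(mᵢ)) · ∏ fᵢ(mᵢ)`. Such an `N` exists as soon as one permutation has all
`pᵢ ∣ m_{τ i}`; if none does, every term of the integer determinant already vanishes.
-/

open Function Finset

namespace ArithmeticFunction

variable {R : Type*}

section Semiring

variable [Semiring R] {f g : ArithmeticFunction R} {a b : ℕ}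

theorem mul_apply_eq_zero_of_lt (hf : a ∈ lowerBounds (support f))
    (hg : b ∈ lowerBounds (support g)) {n : ℕ} (hn : n < a * b) : (f * g) n = 0 := by
  rw [mul_apply]
  refine sum_eq_zero fun ⟨d, e⟩ hde => ?_
  rw [Nat.mem_divisorsAntidiagonal] at hde
  by_contra hne
  have hd : a ≤ d := hf (left_ne_zero_of_mul hne)
  have he : b ≤ e := hg (right_ne_zero_of_mul hne)
  exact hn.not_ge (hde.1 ▸ Nat.mul_le_mul hd he)

theorem mul_mem_lowerBounds_support (hf : a ∈ lowerBounds (support f))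
    (hg : b ∈ lowerBounds (support g)) : a * b ∈ lowerBounds (support (f * g)) :=
  fun _ hn => not_lt.mp fun hlt => hn (mul_apply_eq_zero_of_lt hf hg hlt)

theorem mul_apply_mul_of_mem_lowerBounds (hf : a ∈ lowerBounds (support f))
    (hg : b ∈ lowerBounds (support g)) : (f * g) (a * b) = f a * g b := by
  rcases eq_or_ne (a * b) 0 with hab | hab
  · rcases mul_eq_zero.mp hab with rfl | rfl <;> simp [hab]
  rw [mul_apply, sum_eq_single (a, b)]
  · rintro ⟨d, e⟩ hde hne
    rw [Nat.mem_divisorsAntidiagonal] at hde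
    by_contra hne0
    have hd : a ≤ d := hf (left_ne_zero_of_mul hne0)
    have he : b ≤ e := hg (right_ne_zero_of_mul hne0)
    have ha : 0 < a := Nat.pos_of_ne_zero (left_ne_zero_of_mul hab)
    have hb : 0 < b := Nat.pos_of_ne_zero (right_ne_zero_of_mul hab)
    have had : a = d := by nlinarith [hde.1]
    have hbe : b = e := by nlinarith [hde.1]
    exact hne (by rw [had, hbe])
  · exact fun h => (h (Nat.mem_divisorsAntidiagonal.mpr ⟨rfl, hab⟩)).elim

end Semiring

section CommSemiring

variable [CommSemiring R] {ι : Type*} {g : ι → ArithmeticFunction R} {c : ι → ℕ}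

theorem prod_mem_lowerBounds_support (s : Finset ι)
    (hc : ∀ i ∈ s, c i ∈ lowerBounds (support (g i))) :
    ∏ i ∈ s, c i ∈ lowerBounds (support ⇑(∏ i ∈ s, g i)) := by
  classical
  induction s using Finset.induction_on with
  | empty =>
    intro n hn
    simp only [prod_empty, mem_support, one_apply, ne_eq, ite_eq_right_iff] at hn ⊢
    omega
  | insert i s hi ih =>
    rw [prod_insert hi, prod_insert hi]
    exact mul_mem_lowerBounds_support (hc i (mem_insert_self i s))
      (ih fun j hj => hc j (mem_insert_of_mem hj))

theorem prod_apply_prod_of_mem_lowerBounds (s : Finset ι)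
    (hc : ∀ i ∈ s, c i ∈ lowerBounds (support (g i))) :
    (∏ i ∈ s, g i) (∏ i ∈ s, c i) = ∏ i ∈ s, g i (c i) := by
  classical
  induction s using Finset.induction_on with
  | empty => simp
  | insert i s hi ih =>
    have hs : ∀ j ∈ s, c j ∈ lowerBounds (support (g j)) :=
      fun j hj => hc j (mem_insert_of_mem hj)
    rw [prod_insert hi, prod_insert hi, prod_insert hi,
      mul_apply_mul_of_mem_lowerBounds (hc i (mem_insert_self i s))
        (prod_mem_lowerBounds_support s hs), ih hs]

end CommSemiring

def evalAddMonoidHom [AddCommMonoid R] (n : ℕ) : ArithmeticFunction R →+ R where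
  toFun F := F n
  map_zero' := rfl
  map_add' _ _ := add_apply

theorem det_apply_eq_det_mul [CommRing R] {ι : Type*} [Fintype ι] [DecidableEq ι]
    (A : Matrix ι ι (ArithmeticFunction R)) (V : Matrix ι ι R) (n : ℕ) (C : R)
    (h : ∀ σ : Equiv.Perm ι, (∏ i, A (σ i) i) n = (∏ i, V (σ i) i) * C) :
    A.det n = V.det * C := by
  change evalAddMonoidHom n A.det = _
  rw [Matrix.det_apply, Matrix.det_apply, map_sum, sum_mul]
  refine sum_congr rfl fun σ _ => ?_
  rw [Units.smul_def, Units.smul_def, map_zsmul, smul_mul_assoc, ← h]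
  rfl

end ArithmeticFunction

theorem ordN_mem_lowerBounds_support (f : ArithmeticFunction ℂ) :
    ordN f ∈ lowerBounds (support f) :=
  fun _ hd => Nat.sInf_le hd

theorem apply_ordN_ne_zero {f : ArithmeticFunction ℂ} (hf : f ≠ 0) : f (ordN f) ≠ 0 := by
  obtain ⟨n, hn⟩ : ∃ n, f n ≠ 0 := by
    by_contra! h
    exact hf (ArithmeticFunction.ext h)
  exact Nat.sInf_mem (s := {n | f n ≠ 0}) ⟨n, hn⟩

theorem ordN_pos {f : ArithmeticFunction ℂ} (hf : f ≠ 0) : 0 < ordN f :=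
  Nat.pos_of_ne_zero fun h => apply_ordN_ne_zero hf (h ▸ ArithmeticFunction.map_zero)

theorem DP_apply (p : ℕ) (f : ArithmeticFunction ℂ) (d : ℕ) :
    DP p f d = (padicValNat p (d * p) : ℂ) * f (d * p) := rfl

theorem ceilDiv_mem_lowerBounds_support_DP {p m : ℕ} (hp : 0 < p) {f : ArithmeticFunction ℂ}
    (hm : m ∈ lowerBounds (support f)) : m ⌈/⌉ p ∈ lowerBounds (support (DP p f)) := by
  intro d hd
  rw [ceilDiv_le_iff_le_mul hp, mul_comm]
  exact hm (right_ne_zero_of_mul (show DP p f d ≠ 0 from hd))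

theorem prod_DP_apply_of_mul_prod_eq {ι : Type*} [Fintype ι] (g : ι → ArithmeticFunction ℂ)
    {p m : ι → ℕ} (hp : ∀ i, 0 < p i) (hm₀ : ∀ i, 0 < m i)
    (hm : ∀ i, m i ∈ lowerBounds (support (g i))) {N : ℕ} (hN : N * ∏ i, p i = ∏ i, m i) :
    (∏ i, DP (p i) (g i)) N = ∏ i, (padicValNat (p i) (m i) : ℂ) * g i (m i) := by
  have hc (i : ι) : m i ⌈/⌉ p i ∈ lowerBounds (support (DP (p i) (g i))) :=
    ceilDiv_mem_lowerBounds_support_DP (hp i) (hm i)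
  by_cases hdvd : ∀ i, p i ∣ m i
  · have hcp (i : ι) : m i ⌈/⌉ p i * p i = m i := by
      obtain ⟨k, hk⟩ := hdvd i
      rw [hk, ← smul_eq_mul (p i) k, smul_ceilDiv (hp i), smul_eq_mul, mul_comm]
    have hNc : N = ∏ i, m i ⌈/⌉ p i := by
      refine Nat.eq_of_mul_eq_mul_right (m := ∏ i, p i) (prod_pos fun i _ => hp i) ?_
      rw [hN, ← prod_mul_distrib]
      exact prod_congr rfl fun i _ => (hcp i).symm
    rw [hNc, prod_apply_prod_of_mem_lowerBounds _ fun i _ => hc i]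
    exact prod_congr rfl fun i _ => by rw [DP_apply, hcp]
  · push Not at hdvd
    obtain ⟨i₀, hi₀⟩ := hdvd
    have hlt : N < ∏ i, m i ⌈/⌉ p i := by
      refine Nat.lt_of_mul_lt_mul_right (a := ∏ i, p i) ?_
      rw [hN, ← prod_mul_distrib]
      refine prod_lt_prod (fun i _ => hm₀ i) (fun i _ => ?_) ⟨i₀, mem_univ i₀, ?_⟩
      · rw [mul_comm]
        exact le_smul_ceilDiv (hp i)
      · refine lt_of_le_of_ne (by rw [mul_comm]; exact le_smul_ceilDiv (hp i₀)) ?_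
        intro h
        exact hi₀ (h ▸ dvd_mul_left _ _)
    rw [notMem_support.mp fun h => hlt.not_ge
      (prod_mem_lowerBounds_support _ (fun i _ => hc i) h)]
    refine (prod_eq_zero (mem_univ i₀) ?_).symm
    rw [padicValNat.eq_zero_of_not_dvd hi₀, Nat.cast_zero, zero_mul]

theorem stmt13_general (n : ℕ) (f : Fin n → ArithmeticFunction ℂ) (hf : ∀ i, f i ≠ 0)
    (p : Fin n → ℕ)
    (hdet : Matrix.det (Matrix.of fun i j => DP (p j) (f i)) = 0) :
    Matrix.det (Matrix.of fun i j => (padicValNat (p j) (ordN (f i)) : ℤ)) = 0 := by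
  set V := Matrix.of fun i j => (padicValNat (p j) (ordN (f i)) : ℤ)
  by_cases hgood : ∃ τ : Equiv.Perm (Fin n), ∀ i, p i ∣ ordN (f (τ i))
  · obtain ⟨τ₀, hτ₀⟩ := hgood
    have hp (i : Fin n) : 0 < p i := Nat.pos_of_dvd_of_pos (hτ₀ i) (ordN_pos (hf _))
    obtain ⟨N, hN⟩ : ∃ N, ∀ τ : Equiv.Perm (Fin n), N * ∏ i, p i = ∏ i, ordN (f (τ i)) := by
      refine ⟨∏ i, ordN (f (τ₀ i)) / p i, fun τ => ?_⟩
      rw [Equiv.prod_comp τ (fun i => ordN (f i)), ← Equiv.prod_comp τ₀ (fun i => ordN (f i)),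
        ← prod_mul_distrib]
      exact prod_congr rfl fun i _ => Nat.div_mul_cancel (hτ₀ i)
    have hjac : (Matrix.of fun i j => DP (p j) (f i)).det N
        = (V.map (Int.cast : ℤ → ℂ)).det * ∏ i, f i (ordN (f i)) :=
      det_apply_eq_det_mul _ _ N _ fun τ => by
        simp only [V, Matrix.of_apply, Matrix.map_apply, Int.cast_natCast]
        rw [prod_DP_apply_of_mul_prod_eq _ hp (fun i => ordN_pos (hf _))
          (fun i => ordN_mem_lowerBounds_support _) (hN τ), prod_mul_distrib,
          Equiv.prod_comp τ (fun i => f i (ordN (f i)))]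
    have hC : ∏ i, f i (ordN (f i)) ≠ 0 := prod_ne_zero_iff.mpr fun i _ => apply_ordN_ne_zero (hf i)
    rw [hdet, ArithmeticFunction.zero_apply, ← Int.cast_det, eq_comm, mul_eq_zero,
      or_iff_left hC] at hjac
    exact_mod_cast hjac
  · push Not at hgood
    rw [Matrix.det_apply]
    refine sum_eq_zero fun τ _ => ?_
    obtain ⟨i, hi⟩ := hgood τ
    rw [prod_eq_zero (mem_univ i) (by simp [V, padicValNat.eq_zero_of_not_dvd hi]), smul_zero]

/-- If `f 1, …, f n` are nonzero arithmetic functions and `p 1, …, p n` distinct primes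
with vanishing Jacobian `det (∂_{p j} (f i)) = 0` (determinant in the Dirichlet ring),
then `det (v_{p j} (v (f i))) = 0` as an integer matrix. -/
theorem stmt13 (n : ℕ) (f : Fin n → ArithmeticFunction ℂ) (hf : ∀ i, f i ≠ 0)
    (p : Fin n → ℕ) (hp : ∀ j, (p j).Prime) (hinj : Function.Injective p)
    (hdet : Matrix.det (Matrix.of fun i j => DP (p j) (f i)) = 0) :
    Matrix.det (Matrix.of fun i j => (padicValNat (p j) (ordN (f i)) : ℤ)) = 0 :=
  stmt13_general n f hf p hdet
end

section
/- The constant-one arithmetic function 𝟙 is transcendental over the subalgebra 𝒯 of finitely supported arithmetic functions in the Dirichlet convolution ring; equivalently, the Riemann zeta function (as a formal Dirichlet series) is transcendental over the ring of Dirichlet polynomials. -/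
open ArithmeticFunction
open scoped Classical

/-!
Take a prime `p` beyond the supports of all coefficients of `P`. Multiplication by the `p`-adic
valuation, `f ↦ (n ↦ v_p(n) f(n))`, is a derivation `∂` of the Dirichlet ring (as `v_p` is
completely additive); it kills every coefficient of `P` but not `𝟙`, since `(∂ 𝟙)(p) = 1`.
Applying `∂` to `P(𝟙) = 0` gives `P'(𝟙) · ∂ 𝟙 = 0`, hence `P'(𝟙) = 0` because the Dirichlet ring
has no zero divisors, and induction on the degree in characteristic zero forces `P = 0`.
-/

open Polynomial

theorem Derivation.eq_zero_of_eval_eq_zero {R A : Type*} [CommRing R] [CommRing A]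
    [NoZeroDivisors A] [CharZero A] [Algebra R A] (D : Derivation R A A) {x : A} (hx : D x ≠ 0)
    {P : A[X]} (hP : ∀ k, D (P.coeff k) = 0) (hroot : P.eval x = 0) : P = 0 := by
  induction hn : P.natDegree using Nat.strong_induction_on generalizing P with
  | _ n ih =>
    rcases eq_or_ne n 0 with rfl | hn0
    · rw [eq_C_of_natDegree_eq_zero hn, eval_C] at hroot
      rw [eq_C_of_natDegree_eq_zero hn, hroot, C_0]
    have hP' : ∀ k, D (P.derivative.coeff k) = 0 := fun k => by
      rw [coeff_derivative, D.leibniz, hP, ← Nat.cast_succ, D.map_natCast, smul_zero, smul_zero,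
        add_zero]
    have hcoeffs : D.mapCoeffs P = 0 := by
      ext k
      exact hP k
    have hroot' : P.derivative.eval x * D x = 0 := by
      have h := D.apply_eval_eq x P
      rwa [hroot, D.map_zero, hcoeffs, (PolynomialModule.eval x).map_zero, zero_add, smul_eq_mul,
        eq_comm] at h
    have hder : P.derivative = 0 :=
      ih _ (hn ▸ natDegree_derivative_lt (hn ▸ hn0)) hP' ((mul_eq_zero.mp hroot').resolve_right hx)
        rfl
    exact absurd (hn ▸ derivative_eq_zero.mp hder) hn0

namespace ArithmeticFunction

section NoZeroDivisors

variable {R : Type*}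

theorem mul_apply_mul_of_forall_lt [Semiring R] {f g : ArithmeticFunction R} {a b : ℕ}
    (hf : ∀ n < a, f n = 0) (hg : ∀ n < b, g n = 0) : (f * g) (a * b) = f a * g b := by
  rcases eq_or_ne a 0 with rfl | ha
  · simp
  rcases eq_or_ne b 0 with rfl | hb
  · simp
  rw [mul_apply, Finset.sum_eq_single_of_mem (a, b)
    (Nat.mem_divisorsAntidiagonal.mpr ⟨rfl, mul_ne_zero ha hb⟩)]
  rintro ⟨d, e⟩ hde hne
  obtain ⟨hde, -⟩ := Nat.mem_divisorsAntidiagonal.mp hde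
  by_cases hd : d < a
  · simp [hf d hd]
  by_cases he : e < b
  · simp [hg e he]
  have : d = a ∧ e = b := by
    constructor <;> nlinarith [Nat.pos_of_ne_zero ha, Nat.pos_of_ne_zero hb]
  exact absurd (Prod.ext this.1 this.2) hne

instance [Semiring R] [NoZeroDivisors R] : NoZeroDivisors (ArithmeticFunction R) where
  eq_zero_or_eq_zero_of_mul_eq_zero {f g} hfg := by
    by_contra! h
    have hf : ∃ n, f n ≠ 0 := by by_contra! hf; exact h.1 (ext hf)
    have hg : ∃ n, g n ≠ 0 := by by_contra! hg; exact h.2 (ext hg)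
    have key := mul_apply_mul_of_forall_lt (a := Nat.find hf) (b := Nat.find hg)
      (fun n hn => not_not.mp (Nat.find_min hf hn)) (fun n hn => not_not.mp (Nat.find_min hg hn))
    rw [hfg, zero_apply, eq_comm] at key
    exact mul_ne_zero (Nat.find_spec hf) (Nat.find_spec hg) key

instance [CommSemiring R] [CharZero R] : CharZero (ArithmeticFunction R) :=
  charZero_of_injective_algebraMap (R := R) fun x y h => by
    simpa using congrArg (· 1) h

end NoZeroDivisors

section Derivation

variable {R S : Type*} [CommRing R] [CommRing S] [Algebra R S]

def pmulDerivation (a : ArithmeticFunction S)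
    (ha : ∀ {m n : ℕ}, m ≠ 0 → n ≠ 0 → a (m * n) = a m + a n) :
    Derivation R (ArithmeticFunction S) (ArithmeticFunction S) where
  toFun := a.pmul
  map_add' f g := by ext; simp [pmul_apply, mul_add]
  map_smul' r f := by ext; simp [pmul_apply]
  map_one_eq_zero' := by
    have ha1 : a 1 = 0 := by simpa using ha one_ne_zero one_ne_zero
    ext n
    by_cases h : n = 1 <;> simp [pmul_apply, h, ha1]
  leibniz' f g := by
    ext n
    simp only [LinearMap.coe_mk, AddHom.coe_mk, smul_eq_mul, mul_comm g]
    simp only [pmul_apply, add_apply, mul_apply, Finset.mul_sum, ← Finset.sum_add_distrib]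
    refine Finset.sum_congr rfl fun x hx => ?_
    obtain ⟨hx, hn⟩ := Nat.mem_divisorsAntidiagonal.mp hx
    rw [← hx] at hn ⊢
    rw [ha (left_ne_zero_of_mul hn) (right_ne_zero_of_mul hn)]
    ring

variable (R) in
def padicValDerivation (p : ℕ) [Fact p.Prime] :
    Derivation R (ArithmeticFunction S) (ArithmeticFunction S) :=
  pmulDerivation ⟨fun n => padicValNat p n, by simp⟩ fun hm hn => by
    simp [padicValNat.mul hm hn]

theorem padicValDerivation_apply (p : ℕ) [Fact p.Prime] (f : ArithmeticFunction S) (n : ℕ) :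
    padicValDerivation R p f n = padicValNat p n * f n := rfl

theorem padicValDerivation_eq_zero {p : ℕ} [Fact p.Prime] {f : ArithmeticFunction S}
    (hf : ∀ n, f n ≠ 0 → n < p) : padicValDerivation R p f = 0 := by
  ext n
  rw [padicValDerivation_apply, zero_apply]
  by_cases hn : f n = 0
  · rw [hn, mul_zero]
  have hn0 : n ≠ 0 := by rintro rfl; exact hn map_zero
  have hpn : ¬p ∣ n := fun hpn => (Nat.le_of_dvd (Nat.pos_of_ne_zero hn0) hpn).not_gt (hf n hn)
  rw [padicValNat.eq_zero_of_not_dvd hpn, Nat.cast_zero, zero_mul]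

end Derivation

end ArithmeticFunction

theorem padicValDerivation_oneA_ne_zero (p : ℕ) [hp : Fact p.Prime] :
    ArithmeticFunction.padicValDerivation ℤ p OneA ≠ 0 := fun h => by
  have hval : (padicValNat p p : ℂ) * OneA p = 0 := congrArg (· p) h
  simp [OneA, hp.out.ne_zero] at hval

theorem exists_forall_coeff_apply_ne_zero_lt {R : Type*} [Semiring R]
    (P : (ArithmeticFunction R)[X]) (hP : ∀ k, {n : ℕ | P.coeff k n ≠ 0}.Finite) :
    ∃ N, ∀ k n, P.coeff k n ≠ 0 → n < N := by
  obtain ⟨N, hN⟩ := (P.support.finite_toSet.biUnion fun k _ => hP k).bddAbove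
  refine ⟨N + 1, fun k n hn => Nat.lt_succ_of_le (hN (Set.mem_biUnion ?_ hn))⟩
  exact mem_support_iff.mpr fun h => hn (by rw [h, ArithmeticFunction.zero_apply])

/-- The constant one function `𝟙` (the Riemann zeta function as Dirichlet series) is
transcendental over the subalgebra `𝒯` of finitely supported arithmetic functions
(Dirichlet polynomials): any polynomial with finitely supported coefficients
vanishing at `𝟙` is zero. -/
theorem stmt17 (P : Polynomial (ArithmeticFunction ℂ))
    (hcoeff : ∀ k, {n : ℕ | (P.coeff k) n ≠ 0}.Finite)
    (hroot : Polynomial.eval OneA P = 0) :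
    P = 0 := by
  obtain ⟨N, hN⟩ := exists_forall_coeff_apply_ne_zero_lt P hcoeff
  obtain ⟨p, hNp, hp⟩ := Nat.exists_infinite_primes N
  have : Fact p.Prime := ⟨hp⟩
  exact (ArithmeticFunction.padicValDerivation ℤ p).eq_zero_of_eval_eq_zero
    (padicValDerivation_oneA_ne_zero p)
    (fun k => ArithmeticFunction.padicValDerivation_eq_zero fun n hn => (hN k n hn).trans_le hNp)
    hroot
end
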